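/- arXiv:2007.05406 — 2 statements merged into one kernel-verified Lean document; each statement's English description precedes it below -/
import Mathlib

section
/- Let Ω ⊂ ℝ³ be a bounded measurable set and v ∈ L²(Ω; ℝ³). Define the Biot–Savart field BSv(x) = ∫_Ω v(y) × (x−y) / (4π|x−y|³) dy. Then the L²(Ω) norm of BSv satisfies ‖BSv‖_{L²(Ω)} ≤ (3|Ω|/(4π))^{1/3} ‖v‖_{L²(Ω)}. -/
/-!
Since `|v(y) × (x - y)| ≤ |v(y)| |x - y|`, the field is bounded pointwise by
`(4π)⁻¹ ∫_Ω |x - y|⁻² |v(y)| dy`. The kernel `|x - y|⁻²` is symmetric, so the weighted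
Cauchy–Schwarz inequality and Tonelli (a Schur test) give
`‖BS v‖² ≤ (4π)⁻² (sup_x ∫_Ω |x - y|⁻² dy)² ‖v‖²`. Among sets of given volume the integral
`∫_Ω |x - y|⁻² dy` is largest for the ball centred at `x`, where it equals `4πR`; for the ball
of volume `|Ω|` this is `4π (3|Ω|/(4π))^{1/3}`.
-/

open MeasureTheory Real Set Metric Function

open scoped ENNReal

noncomputable section

/-- The cross product of two vectors of `ℝ³` (as `EuclideanSpace`). -/
def crossE (a b : EuclideanSpace ℝ (Fin 3)) : EuclideanSpace ℝ (Fin 3) :=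
  (WithLp.equiv 2 (Fin 3 → ℝ)).symm
    ![a 1 * b 2 - a 2 * b 1, a 2 * b 0 - a 0 * b 2, a 0 * b 1 - a 1 * b 0]

/-- The Biot–Savart field of `v` on `Ω`:
`BSv(x) = ∫_Ω v(y) × (x−y) / (4π|x−y|³) dy`. -/
def biotSavart (Ω : Set (EuclideanSpace ℝ (Fin 3)))
    (v : EuclideanSpace ℝ (Fin 3) → EuclideanSpace ℝ (Fin 3))
    (x : EuclideanSpace ℝ (Fin 3)) : EuclideanSpace ℝ (Fin 3) :=
  ∫ y in Ω, (4 * π * ‖x - y‖ ^ 3)⁻¹ • crossE (v y) (x - y)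

section Lebesgue

variable {α β : Type*} [MeasurableSpace α] [MeasurableSpace β] {μ : Measure α} {ν : Measure β}

theorem integral_le_toReal_lintegral_ofReal (f : α → ℝ) :
    ∫ a, f a ∂μ ≤ (∫⁻ a, ENNReal.ofReal (f a) ∂μ).toReal := by
  by_cases hf : Integrable f μ
  · rw [integral_eq_lintegral_pos_part_sub_lintegral_neg_part hf]
    exact sub_le_self _ ENNReal.toReal_nonneg
  · rw [integral_undef hf]
    exact ENNReal.toReal_nonneg

theorem integral_norm_sq_le_of_lintegral_enorm_sq_le {E F : Type*} [NormedAddCommGroup E]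
    [NormedAddCommGroup F] {f : α → E} {g : α → F} {C : ℝ} (hC : 0 ≤ C) (hg : MemLp g 2 μ)
    (h : ∫⁻ a, ‖f a‖ₑ ^ 2 ∂μ ≤ ENNReal.ofReal C * ∫⁻ a, ‖g a‖ₑ ^ 2 ∂μ) :
    ∫ a, ‖f a‖ ^ 2 ∂μ ≤ C * ∫ a, ‖g a‖ ^ 2 ∂μ := by
  have hg_sq : Integrable (fun a => ‖g a‖ ^ 2) μ := hg.integrable_norm_pow two_ne_zero
  have hg_fin : ∫⁻ a, ‖g a‖ₑ ^ 2 ∂μ ≠ ∞ := by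
    simpa only [ENNReal.ofReal_pow, norm_nonneg, ofReal_norm] using hg_sq.lintegral_lt_top.ne
  calc ∫ a, ‖f a‖ ^ 2 ∂μ ≤ (∫⁻ a, ‖f a‖ₑ ^ 2 ∂μ).toReal := by
        refine (integral_le_toReal_lintegral_ofReal _).trans_eq ?_
        simp only [ENNReal.ofReal_pow, norm_nonneg, ofReal_norm]
    _ ≤ (ENNReal.ofReal C * ∫⁻ a, ‖g a‖ₑ ^ 2 ∂μ).toReal :=
        ENNReal.toReal_mono (ENNReal.mul_ne_top ENNReal.ofReal_ne_top hg_fin) h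
    _ = C * ∫ a, ‖g a‖ ^ 2 ∂μ := by
        rw [ENNReal.toReal_mul, ENNReal.toReal_ofReal hC, integral_eq_lintegral_of_nonneg_ae
          (ae_of_all _ fun a => by positivity) hg_sq.aestronglyMeasurable]
        simp only [ENNReal.ofReal_pow, norm_nonneg, ofReal_norm]

theorem lintegral_mul_sq_le {w f : α → ℝ≥0∞} (hw : AEMeasurable w μ) (hf : AEMeasurable f μ) :
    (∫⁻ a, w a * f a ∂μ) ^ 2 ≤ (∫⁻ a, w a ∂μ) * ∫⁻ a, w a * f a ^ 2 ∂μ := by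
  have hsplit : ∀ a, w a * f a = w a ^ (1 / 2 : ℝ) * (w a * f a ^ 2) ^ (1 / 2 : ℝ) := fun a => by
    rw [ENNReal.mul_rpow_of_nonneg _ _ (by norm_num), ← mul_assoc,
      ← ENNReal.rpow_add_of_nonneg _ _ (by norm_num) (by norm_num), ← ENNReal.rpow_natCast,
      ← ENNReal.rpow_mul]
    norm_num
  have hholder : ∫⁻ a, w a ^ (1 / 2 : ℝ) * (w a * f a ^ 2) ^ (1 / 2 : ℝ) ∂μ ≤
      (∫⁻ a, w a ∂μ) ^ (1 / 2 : ℝ) * (∫⁻ a, w a * f a ^ 2 ∂μ) ^ (1 / 2 : ℝ) :=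
    ENNReal.lintegral_mul_norm_pow_le hw (hw.mul (hf.pow_const 2)) (by norm_num) (by norm_num)
      (by norm_num)
  simp_rw [← hsplit] at hholder
  calc (∫⁻ a, w a * f a ∂μ) ^ 2
      ≤ ((∫⁻ a, w a ∂μ) ^ (1 / 2 : ℝ) * (∫⁻ a, w a * f a ^ 2 ∂μ) ^ (1 / 2 : ℝ)) ^ 2 := by
        gcongr
    _ = (∫⁻ a, w a ∂μ) * ∫⁻ a, w a * f a ^ 2 ∂μ := by
        rw [← ENNReal.mul_rpow_of_nonneg _ _ (by norm_num), ← ENNReal.rpow_natCast,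
          ← ENNReal.rpow_mul]
        norm_num

theorem lintegral_sq_lintegral_mul_le [SFinite μ] [SFinite ν] {k : α → β → ℝ≥0∞}
    {f : β → ℝ≥0∞} {A B : ℝ≥0∞} (hk : Measurable (uncurry k)) (hf : AEMeasurable f ν)
    (h_row : ∀ x, ∫⁻ y, k x y ∂ν ≤ A) (h_col : ∀ y, ∫⁻ x, k x y ∂μ ≤ B) :
    ∫⁻ x, (∫⁻ y, k x y * f y ∂ν) ^ 2 ∂μ ≤ A * B * ∫⁻ y, f y ^ 2 ∂ν := by
  have hF : AEMeasurable (fun p : α × β => k p.1 p.2 * f p.2 ^ 2) (μ.prod ν) :=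
    hk.aemeasurable.mul (hf.pow_const 2).comp_snd
  calc ∫⁻ x, (∫⁻ y, k x y * f y ∂ν) ^ 2 ∂μ
      ≤ ∫⁻ x, A * ∫⁻ y, k x y * f y ^ 2 ∂ν ∂μ := by
        refine lintegral_mono fun x =>
          (lintegral_mul_sq_le hk.of_uncurry_left.aemeasurable hf).trans ?_
        gcongr
        exact h_row x
    _ = A * ∫⁻ y, (∫⁻ x, k x y ∂μ) * f y ^ 2 ∂ν := by
        rw [lintegral_const_mul'' _ hF.lintegral_prod_right', lintegral_lintegral_swap hF]
        exact congrArg (A * ·) (lintegral_congr fun y =>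
          lintegral_mul_const'' (f y ^ 2) hk.of_uncurry_right.aemeasurable)
    _ ≤ A * (B * ∫⁻ y, f y ^ 2 ∂ν) := by
        rw [← lintegral_const_mul'' _ (hf.pow_const 2)]
        gcongr with y
        exact h_col y
    _ = A * B * ∫⁻ y, f y ^ 2 ∂ν := by rw [mul_assoc]

theorem setLIntegral_le_setLIntegral_of_measure_le {s t : Set α} {f : α → ℝ≥0∞} {c : ℝ≥0∞}
    (hs : MeasurableSet s) (ht : MeasurableSet t) (hst : μ s ≤ μ t) (hs_fin : μ s ≠ ∞)
    (h_out : ∀ y ∈ s \ t, f y ≤ c) (h_in : ∀ y ∈ t \ s, c ≤ f y) :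
    ∫⁻ y in s, f y ∂μ ≤ ∫⁻ y in t, f y ∂μ := by
  have hdiff : μ (s \ t) ≤ μ (t \ s) := by
    refine ENNReal.le_of_add_le_add_left
      (measure_ne_top_of_subset (inter_subset_left (t := t)) hs_fin) ?_
    rwa [measure_inter_add_sdiff s ht, inter_comm, measure_inter_add_sdiff t hs]
  calc ∫⁻ y in s, f y ∂μ = ∫⁻ y in s ∩ t, f y ∂μ + ∫⁻ y in s \ t, f y ∂μ :=
        (lintegral_inter_add_sdiff f s ht).symm
    _ ≤ ∫⁻ y in s ∩ t, f y ∂μ + c * μ (t \ s) := by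
        gcongr
        calc ∫⁻ y in s \ t, f y ∂μ ≤ ∫⁻ _ in s \ t, c ∂μ :=
              setLIntegral_mono measurable_const h_out
          _ ≤ c * μ (t \ s) := by rw [setLIntegral_const]; gcongr
    _ ≤ ∫⁻ y in t ∩ s, f y ∂μ + ∫⁻ y in t \ s, f y ∂μ := by
        rw [inter_comm, ← setLIntegral_const]
        exact add_le_add_right (lintegral_mono_ae
          ((ae_restrict_iff' (ht.diff hs)).2 (ae_of_all _ h_in))) _
    _ = ∫⁻ y in t, f y ∂μ := lintegral_inter_add_sdiff f t hs

end Lebesgue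

local notation "ℝ³" => EuclideanSpace ℝ (Fin 3)

theorem norm_crossE_le (a b : ℝ³) : ‖crossE a b‖ ≤ ‖a‖ * ‖b‖ := by
  rw [EuclideanSpace.norm_eq, EuclideanSpace.norm_eq, EuclideanSpace.norm_eq,
    ← Real.sqrt_mul (by positivity)]
  apply Real.sqrt_le_sqrt
  simp only [crossE, Fin.sum_univ_three, WithLp.equiv_symm_apply, PiLp.toLp_apply,
    Matrix.cons_val_zero, Matrix.cons_val_one, Matrix.cons_val_two, Matrix.head_cons,
    Matrix.tail_cons, Real.norm_eq_abs, sq_abs]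
  -- Lagrange's identity: the defect is `⟪a, b⟫²`.
  nlinarith [sq_nonneg (a 0 * b 0 + a 1 * b 1 + a 2 * b 2)]

theorem setIntegral_ball_zero_norm_sq_inv {R : ℝ} (hR : 0 ≤ R) :
    ∫ z in ball (0 : ℝ³) R, (‖z‖ ^ 2)⁻¹ = 4 * π * R := by
  have hradial : ∫ r in Ioi (0 : ℝ), r ^ 2 • (Iio R).indicator (fun r => (r ^ 2)⁻¹) r = R := by
    rw [setIntegral_congr_fun measurableSet_Ioi (g := (Iio R).indicator 1) fun r (hr : 0 < r) => by
      by_cases hrR : r < R <;> simp [hrR, hr.ne']]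
    rw [integral_indicator_one measurableSet_Iio, measureReal_restrict_apply measurableSet_Iio,
      Iio_inter_Ioi, Real.volume_real_Ioo_of_le hR, sub_zero]
  rw [← integral_indicator measurableSet_ball]
  calc ∫ z, (ball (0 : ℝ³) R).indicator (fun z => (‖z‖ ^ 2)⁻¹) z
      = ∫ z : ℝ³, (Iio R).indicator (fun r => (r ^ 2)⁻¹) ‖z‖ := by
        congr 1 with z
        by_cases hz : ‖z‖ < R <;> simp [indicator, hz]
    _ = 4 * π * R := by
        rw [integral_fun_norm_addHaar, finrank_euclideanSpace_fin, hradial, measureReal_def,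
          EuclideanSpace.volume_ball_fin_three]
        simp [ENNReal.toReal_ofReal (by positivity : 0 ≤ π * 4 / 3)]
        ring

theorem lintegral_ball_enorm_sub_inv_sq (x : ℝ³) {R : ℝ} (hR : 0 ≤ R) :
    ∫⁻ y in ball x R, ‖x - y‖ₑ⁻¹ ^ 2 = ENNReal.ofReal (4 * π * R) := by
  have hcentre : ∫⁻ y in ball x R, ‖x - y‖ₑ⁻¹ ^ 2 = ∫⁻ z in ball (0 : ℝ³) R, ‖z‖ₑ⁻¹ ^ 2 := by
    rw [← lintegral_indicator measurableSet_ball, ← lintegral_indicator measurableSet_ball,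
      ← lintegral_sub_left_eq_self _ x]
    congr 1 with y
    simp [indicator, dist_eq_norm]
  have hint : IntegrableOn (fun z : ℝ³ => (‖z‖ ^ 2)⁻¹) (ball 0 R) := by
    rw [integrableOn_fun_norm_addHaar volume (f := fun r => (r ^ 2)⁻¹), finrank_euclideanSpace_fin]
    refine (integrableOn_const (C := (1 : ℝ)) (by simp)).congr_fun
      (fun r (hr : r ∈ Ioo 0 R) => ?_) measurableSet_Ioo
    simp [hr.1.ne']
  have hae : ∀ᵐ z ∂volume.restrict (ball (0 : ℝ³) R),
      ‖z‖ₑ⁻¹ ^ 2 = ENNReal.ofReal (‖z‖ ^ 2)⁻¹ := by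
    filter_upwards [ae_restrict_of_ae (volume.ae_ne (0 : ℝ³))] with z hz
    rw [ENNReal.ofReal_inv_of_pos (by positivity), ENNReal.ofReal_pow (norm_nonneg _), ofReal_norm,
      ENNReal.inv_pow]
  rw [hcentre, lintegral_congr_ae hae, ← ofReal_integral_eq_lintegral_ofReal hint
    (ae_of_all _ fun z => by positivity), setIntegral_ball_zero_norm_sq_inv hR]

/-- The radius of the ball whose volume is that of `Ω`. -/
def volumeRadius (Ω : Set ℝ³) : ℝ := (3 * (volume Ω).toReal / (4 * π)) ^ ((1 : ℝ) / 3)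

theorem volumeRadius_nonneg (Ω : Set ℝ³) : 0 ≤ volumeRadius Ω :=
  Real.rpow_nonneg (by positivity) _

theorem volume_ball_volumeRadius {Ω : Set ℝ³} (hΩ : volume Ω ≠ ∞) (x : ℝ³) :
    volume (ball x (volumeRadius Ω)) = volume Ω := by
  have hR3 : volumeRadius Ω ^ 3 = 3 * (volume Ω).toReal / (4 * π) := by
    rw [volumeRadius, ← Real.rpow_natCast, ← Real.rpow_mul (by positivity)]
    norm_num
  rw [EuclideanSpace.volume_ball_fin_three, ← ENNReal.ofReal_pow (volumeRadius_nonneg Ω),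
    ← ENNReal.ofReal_mul (pow_nonneg (volumeRadius_nonneg Ω) 3), hR3,
    show 3 * (volume Ω).toReal / (4 * π) * (π * 4 / 3) = (volume Ω).toReal by field_simp,
    ENNReal.ofReal_toReal hΩ]

theorem lintegral_enorm_sub_inv_sq_le {Ω : Set ℝ³} (hΩ : volume Ω ≠ ∞) (x : ℝ³) :
    ∫⁻ y in Ω, ‖x - y‖ₑ⁻¹ ^ 2 ≤ ENNReal.ofReal (4 * π * volumeRadius Ω) := by
  have hdist : ∀ y, ‖x - y‖ₑ = edist y x := fun y => by rw [edist_comm, edist_eq_enorm_sub]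
  rw [← Measure.restrict_toMeasurable_of_sFinite,
    ← lintegral_ball_enorm_sub_inv_sq x (volumeRadius_nonneg Ω)]
  -- `‖x - x‖ₑ⁻¹ = ∞`, so the kernel is at least `R⁻²` on the whole ball, centre included.
  refine setLIntegral_le_setLIntegral_of_measure_le (c := (ENNReal.ofReal (volumeRadius Ω))⁻¹ ^ 2)
    (measurableSet_toMeasurable _ _) measurableSet_ball
    (by rw [measure_toMeasurable, volume_ball_volumeRadius hΩ]) (by rwa [measure_toMeasurable])
    ?_ ?_
  · rintro y ⟨-, hy⟩
    rw [mem_ball, not_lt, ← ENNReal.ofReal_le_ofReal_iff dist_nonneg, ← edist_dist] at hy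
    rw [hdist]
    gcongr
  · rintro y ⟨hy, -⟩
    rw [mem_ball, ← edist_lt_ofReal] at hy
    rw [hdist]
    gcongr

theorem enorm_biotSavart_le (Ω : Set ℝ³) (v : ℝ³ → ℝ³) (x : ℝ³) :
    ‖biotSavart Ω v x‖ₑ ≤ ENNReal.ofReal (4 * π)⁻¹ * ∫⁻ y in Ω, ‖x - y‖ₑ⁻¹ ^ 2 * ‖v y‖ₑ := by
  have hkernel : ∀ a d : ℝ³, ‖(4 * π * ‖d‖ ^ 3)⁻¹ • crossE a d‖ₑ ≤
      ENNReal.ofReal (4 * π)⁻¹ * (‖d‖ₑ⁻¹ ^ 2 * ‖a‖ₑ) := fun a d => by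
    rcases eq_or_ne d 0 with rfl | hd
    · simp
    rw [← ofReal_norm, ← ofReal_norm, ← ofReal_norm, ← ENNReal.ofReal_inv_of_pos (by positivity),
      ← ENNReal.ofReal_pow (by positivity), ← ENNReal.ofReal_mul (by positivity),
      ← ENNReal.ofReal_mul (by positivity), norm_smul, norm_inv,
      Real.norm_of_nonneg (by positivity)]
    refine ENNReal.ofReal_le_ofReal ((mul_le_mul_of_nonneg_left (norm_crossE_le a d)
      (by positivity)).trans_eq ?_)
    field_simp
  calc ‖biotSavart Ω v x‖ₑ
      ≤ ∫⁻ y in Ω, ‖(4 * π * ‖x - y‖ ^ 3)⁻¹ • crossE (v y) (x - y)‖ₑ :=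
        enorm_integral_le_lintegral_enorm _
    _ ≤ ∫⁻ y in Ω, ENNReal.ofReal (4 * π)⁻¹ * (‖x - y‖ₑ⁻¹ ^ 2 * ‖v y‖ₑ) :=
        lintegral_mono fun y => hkernel (v y) (x - y)
    _ = ENNReal.ofReal (4 * π)⁻¹ * ∫⁻ y in Ω, ‖x - y‖ₑ⁻¹ ^ 2 * ‖v y‖ₑ :=
        lintegral_const_mul' _ _ ENNReal.ofReal_ne_top

theorem lintegral_enorm_biotSavart_sq_le {Ω : Set ℝ³} (hΩ : volume Ω ≠ ∞) {v : ℝ³ → ℝ³}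
    (hv : AEMeasurable v (volume.restrict Ω)) :
    ∫⁻ x in Ω, ‖biotSavart Ω v x‖ₑ ^ 2 ≤
      ENNReal.ofReal (volumeRadius Ω ^ 2) * ∫⁻ y in Ω, ‖v y‖ₑ ^ 2 := by
  set c := ENNReal.ofReal (4 * π)⁻¹
  set A := ENNReal.ofReal (4 * π * volumeRadius Ω)
  have hschur := lintegral_sq_lintegral_mul_le (μ := volume.restrict Ω) (ν := volume.restrict Ω)
    (k := fun x y => ‖x - y‖ₑ⁻¹ ^ 2) (A := A) (B := A) (by fun_prop) hv.enorm
    (lintegral_enorm_sub_inv_sq_le hΩ) fun y => by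
      simpa only [enorm_sub_rev] using lintegral_enorm_sub_inv_sq_le hΩ y
  calc ∫⁻ x in Ω, ‖biotSavart Ω v x‖ₑ ^ 2
      ≤ ∫⁻ x in Ω, c ^ 2 * (∫⁻ y in Ω, ‖x - y‖ₑ⁻¹ ^ 2 * ‖v y‖ₑ) ^ 2 := by
        refine lintegral_mono fun x => ?_
        rw [← mul_pow]
        gcongr
        exact enorm_biotSavart_le Ω v x
    _ ≤ c ^ 2 * (A * A * ∫⁻ y in Ω, ‖v y‖ₑ ^ 2) := by
        rw [lintegral_const_mul' _ _ (by simp [c])]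
        exact mul_le_mul_right hschur _
    _ = ENNReal.ofReal (volumeRadius Ω ^ 2) * ∫⁻ y in Ω, ‖v y‖ₑ ^ 2 := by
        have hR := volumeRadius_nonneg Ω
        rw [← mul_assoc, ← mul_assoc]
        congr 1
        rw [← ENNReal.ofReal_pow (by positivity), ← ENNReal.ofReal_mul (by positivity),
          ← ENNReal.ofReal_mul (by positivity)]
        congr 1
        field_simp

theorem biotSavart_L2_bound_general (Ω : Set (EuclideanSpace ℝ (Fin 3)))
    (hΩbdd : Bornology.IsBounded Ω)
    (v : EuclideanSpace ℝ (Fin 3) → EuclideanSpace ℝ (Fin 3))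
    (hv : MemLp v 2 (volume.restrict Ω)) :
    Real.sqrt (∫ x in Ω, ‖biotSavart Ω v x‖ ^ 2) ≤
      (3 * (volume Ω).toReal / (4 * π)) ^ ((1 : ℝ) / 3) *
        Real.sqrt (∫ x in Ω, ‖v x‖ ^ 2) := by
  have hsq : ∫ x in Ω, ‖biotSavart Ω v x‖ ^ 2 ≤ volumeRadius Ω ^ 2 * ∫ x in Ω, ‖v x‖ ^ 2 :=
    integral_norm_sq_le_of_lintegral_enorm_sq_le (sq_nonneg _) hv
      (lintegral_enorm_biotSavart_sq_le hΩbdd.measure_lt_top.ne hv.1.aemeasurable)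
  calc Real.sqrt (∫ x in Ω, ‖biotSavart Ω v x‖ ^ 2)
      ≤ Real.sqrt (volumeRadius Ω ^ 2 * ∫ x in Ω, ‖v x‖ ^ 2) := Real.sqrt_le_sqrt hsq
    _ = volumeRadius Ω * Real.sqrt (∫ x in Ω, ‖v x‖ ^ 2) := by
        rw [Real.sqrt_mul (by positivity), Real.sqrt_sq (volumeRadius_nonneg Ω)]

/-- for `Ω ⊂ ℝ³` bounded measurable and `v ∈ L²(Ω;ℝ³)`,
`‖BS v‖_{L²(Ω)} ≤ (3|Ω|/(4π))^{1/3} ‖v‖_{L²(Ω)}`. -/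
theorem biotSavart_L2_bound (Ω : Set (EuclideanSpace ℝ (Fin 3)))
    (hΩmeas : MeasurableSet Ω) (hΩbdd : Bornology.IsBounded Ω)
    (v : EuclideanSpace ℝ (Fin 3) → EuclideanSpace ℝ (Fin 3))
    (hv : MemLp v 2 (volume.restrict Ω)) :
    Real.sqrt (∫ x in Ω, ‖biotSavart Ω v x‖ ^ 2) ≤
      (3 * (volume Ω).toReal / (4 * π)) ^ ((1 : ℝ) / 3) *
        Real.sqrt (∫ x in Ω, ‖v x‖ ^ 2) :=
  biotSavart_L2_bound_general Ω hΩbdd v hv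

end
end

section
/- Let D ⊂ ℝ × (0,∞) be a bounded C² planar domain with connected boundary, ψ ∈ C²(D̄), and suppose ψ|_{∂D} = c₁ and ((∇ψ)² + μ²c₁²)/r² = c₂ on ∂D for constants c₁ ≠ 0, c₂ > 0 and μ ≠ 0. Then the zero set Z of ∇ψ on ∂D equals the set R_D = {(z,r) ∈ ∂D : r = δ} of points of ∂D at minimal distance δ = min{r : (z,r) ∈ ∂D} from the z-axis, provided Z is nonempty. -/
/-!
On `∂D` the boundary condition reads `|∇ψ|² = c₂ r² - μ² c₁²`, a strictly increasing function
of `r > 0`. Being nonnegative and vanishing somewhere on `∂D`, it vanishes exactly where `r` is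
minimal.
-/

open Real

noncomputable section

/-- Gradient of a planar scalar function, the coordinates being `(z, r)`. -/
def grad2 (ψ : ℝ × ℝ → ℝ) (p : ℝ × ℝ) : ℝ × ℝ :=
  (fderiv ℝ ψ p (1, 0), fderiv ℝ ψ p (0, 1))

theorem StrictMonoOn.sep_comp_eq_sep_forall_le {α β γ : Type*} [LinearOrder β] [PartialOrder γ]
    {S : Set α} {r : α → β} {φ : β → γ} {m : γ} (hφ : StrictMonoOn φ (r '' S))
    (hm : ∀ p ∈ S, m ≤ φ (r p)) (hattained : ∃ p₀ ∈ S, φ (r p₀) = m) :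
    {p ∈ S | φ (r p) = m} = {p ∈ S | ∀ q ∈ S, r p ≤ r q} := by
  obtain ⟨p₀, hp₀, hφp₀⟩ := hattained
  ext p
  refine and_congr_right fun hp => ⟨fun hφp q hq => ?_, fun hmin => ?_⟩
  · exact (hφ.le_iff_le ⟨p, hp, rfl⟩ ⟨q, hq, rfl⟩).mp (hφp ▸ hm q hq)
  · have : φ (r p) ≤ m := hφp₀ ▸ hφ.monotoneOn ⟨p, hp, rfl⟩ ⟨p₀, hp₀, rfl⟩ (hmin p₀ hp₀)
    exact le_antisymm this (hm p hp)

theorem Prod.eq_zero_iff_fst_sq_add_snd_sq_eq_zero (v : ℝ × ℝ) :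
    v = 0 ↔ v.1 ^ 2 + v.2 ^ 2 = 0 := by
  rw [add_eq_zero_iff_of_nonneg (sq_nonneg _) (sq_nonneg _), pow_eq_zero_iff two_ne_zero,
    pow_eq_zero_iff two_ne_zero, Prod.ext_iff]
  rfl

theorem strictMonoOn_mul_sq_sub {c : ℝ} (hc : 0 < c) (a : ℝ) :
    StrictMonoOn (fun t : ℝ => c * t ^ 2 - a) (Set.Ici 0) := fun x hx y _ hxy => by
  have : (0 : ℝ) ≤ x := hx
  dsimp only
  gcongr

theorem zero_set_eq_innermost_points_general
    (D : Set (ℝ × ℝ))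
    (hDpos : closure D ⊆ {p : ℝ × ℝ | 0 < p.2})
    (ψ : ℝ × ℝ → ℝ)
    (μ c₁ c₂ : ℝ) (hc₂ : 0 < c₂)
    (hNeu : ∀ p ∈ frontier D,
      ((grad2 ψ p).1 ^ 2 + (grad2 ψ p).2 ^ 2 + μ ^ 2 * c₁ ^ 2) / p.2 ^ 2 = c₂)
    (hZ : {p ∈ frontier D | grad2 ψ p = 0}.Nonempty) :
    {p ∈ frontier D | grad2 ψ p = 0} =
      {p ∈ frontier D | ∀ q ∈ frontier D, p.2 ≤ q.2} := by
  set φ : ℝ → ℝ := fun t => c₂ * t ^ 2 - μ ^ 2 * c₁ ^ 2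
  have hr : ∀ p ∈ frontier D, 0 < p.2 := fun p hp => hDpos (frontier_subset_closure hp)
  have hgrad : ∀ p ∈ frontier D, (grad2 ψ p).1 ^ 2 + (grad2 ψ p).2 ^ 2 = φ p.2 := by
    intro p hp
    have h := hNeu p hp
    rw [div_eq_iff (pow_ne_zero 2 (hr p hp).ne')] at h
    linarith
  have hzero : ∀ p ∈ frontier D, grad2 ψ p = 0 ↔ φ p.2 = 0 := fun p hp => by
    rw [Prod.eq_zero_iff_fst_sq_add_snd_sq_eq_zero, hgrad p hp]
  have hmono : StrictMonoOn φ (Prod.snd '' frontier D) :=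
    (strictMonoOn_mul_sq_sub hc₂ _).mono <| by
      rintro _ ⟨p, hp, rfl⟩
      exact (hr p hp).le
  calc {p ∈ frontier D | grad2 ψ p = 0}
      = {p ∈ frontier D | φ p.2 = 0} := Set.ext fun p => and_congr_right (hzero p)
    _ = _ := hmono.sep_comp_eq_sep_forall_le
        (fun p hp => hgrad p hp ▸ add_nonneg (sq_nonneg _) (sq_nonneg _))
        (hZ.imp fun p ⟨hp, hp0⟩ => ⟨hp, (hzero p hp).mp hp0⟩)

/-- let `D ⊂ ℝ × (0,∞)` be a bounded `C²` planar domain with connected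
boundary, and `ψ ∈ C²(D̄)` satisfy `ψ = c₁` and `((∇ψ)² + μ²c₁²)/r² = c₂` on `∂D`, with
`c₁ ≠ 0`, `c₂ > 0`, `μ ≠ 0`. If the zero set `Z` of `∇ψ` on `∂D` is nonempty, then it
equals the set `R_D` of points of `∂D` closest to the `z`-axis. -/
theorem zero_set_eq_innermost_points
    (D : Set (ℝ × ℝ)) (hD : IsOpen D) (hDbdd : Bornology.IsBounded D)
    (hDpos : closure D ⊆ {p : ℝ × ℝ | 0 < p.2})
    (hconn : IsConnected (frontier D))
    (ψ : ℝ × ℝ → ℝ) (hψ : ContDiff ℝ 2 ψ)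
    (μ c₁ c₂ : ℝ) (hμ : μ ≠ 0) (hc₁ : c₁ ≠ 0) (hc₂ : 0 < c₂)
    (hDir : ∀ p ∈ frontier D, ψ p = c₁)
    (hNeu : ∀ p ∈ frontier D,
      ((grad2 ψ p).1 ^ 2 + (grad2 ψ p).2 ^ 2 + μ ^ 2 * c₁ ^ 2) / p.2 ^ 2 = c₂)
    (hZ : {p ∈ frontier D | grad2 ψ p = 0}.Nonempty) :
    {p ∈ frontier D | grad2 ψ p = 0} =
      {p ∈ frontier D | ∀ q ∈ frontier D, p.2 ≤ q.2} :=
  zero_set_eq_innermost_points_general D hDpos ψ μ c₁ c₂ hc₂ hNeu hZ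

end
end
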